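/- Let a ≠ 1 and 0 < u₀ < 1 with a − 1 + u₀·(1 − exp(−(a−1)t)) ≠ 0. Then |u₀·(a−1)·exp(−(a−1)t)/(a−1+u₀(1−exp(−(a−1)t))) − u₀·exp(−(a−1)t)| ≤ C·u₀² for an explicit constant C depending on a and t but not on u₀, for all t in a fixed compact interval. -/
import Mathlib

open Real

theorem stmt4 (a T : ℝ) (ha : a ≠ 1) (hT : 0 ≤ T) :
    ∃ C : ℝ, ∀ u₀ t : ℝ, 0 < u₀ → u₀ < 1 → t ∈ Set.Icc 0 T →
      a - 1 + u₀ * (1 - exp (-(a-1)*t)) ≠ 0 →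
      |u₀*(a-1)*exp (-(a-1)*t) / (a - 1 + u₀*(1 - exp (-(a-1)*t)))
        - u₀ * exp (-(a-1)*t)| ≤ C * u₀^2 := by
  have hb : a - 1 ≠ 0 := sub_ne_zero.mpr ha
  have hbpos : 0 < |a - 1| := abs_pos.mpr hb
  refine ⟨exp (2 * |a - 1| * T) / |a - 1|, ?_⟩
  intro u₀ t hu0 hu1 ht hD
  obtain ⟨ht0, htT⟩ := ht
  set E := exp (-(a-1)*t) with hEdef
  set D := a - 1 + u₀*(1 - E) with hDdef
  have hEpos : 0 < E := exp_pos _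
  have hM1 : (1:ℝ) ≤ exp (|a - 1| * T) := by
    have h0 : (0:ℝ) ≤ |a - 1| * T := mul_nonneg (abs_nonneg _) hT
    simpa using exp_le_exp.mpr h0
  have hEle : E ≤ exp (|a - 1| * T) := by
    apply exp_le_exp.mpr
    calc -(a-1)*t ≤ |(-(a-1))*t| := le_abs_self _
      _ = |a - 1| * |t| := by rw [abs_mul, abs_neg]
      _ ≤ |a - 1| * T := by
          apply mul_le_mul_of_nonneg_left _ (abs_nonneg _)
          rw [abs_of_nonneg ht0]; exact htT
  have h1E : |1 - E| ≤ exp (|a - 1| * T) := by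
    apply abs_le.mpr
    constructor <;> nlinarith
  have hDabs : |a - 1| ≤ |D| := by
    rcases lt_or_gt_of_ne hb with hneg | hpos
    · -- a - 1 < 0 : E ≥ 1, 1 - E ≤ 0, D ≤ a - 1 < 0
      have hE1 : 1 ≤ E := by
        apply one_le_exp
        nlinarith
      have hD2 : D ≤ a - 1 := by
        have : u₀ * (1 - E) ≤ 0 := mul_nonpos_of_nonneg_of_nonpos hu0.le (by linarith)
        rw [hDdef]; linarith
      rw [abs_of_neg hneg, abs_of_neg (by linarith : D < 0)]; linarith
    · -- a - 1 > 0 : E ≤ 1, D ≥ a - 1 > 0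
      have hE1 : E ≤ 1 := by
        rw [hEdef]
        calc exp (-(a-1)*t) ≤ exp 0 := exp_le_exp.mpr (by nlinarith)
          _ = 1 := exp_zero
      have hD2 : a - 1 ≤ D := by
        have : 0 ≤ u₀ * (1 - E) := mul_nonneg hu0.le (by linarith)
        rw [hDdef]; linarith
      rw [abs_of_pos hpos, abs_of_pos (by linarith : 0 < D)]; linarith
  have hDpos : 0 < |D| := lt_of_lt_of_le hbpos hDabs
  have key : u₀*(a-1)*E/D - u₀*E = -(u₀^2*(E*(1-E))/D) := by
    field_simp
    ring
  rw [key, abs_neg, abs_div, abs_mul, abs_mul, abs_of_pos hEpos,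
    abs_of_pos (pow_pos hu0 2)]
  have hnum : u₀^2 * (E * |1 - E|) ≤ u₀^2 * (exp (|a - 1| * T) * exp (|a - 1| * T)) := by
    apply mul_le_mul_of_nonneg_left _ (sq_nonneg _)
    exact mul_le_mul hEle h1E (abs_nonneg _) (exp_pos _).le
  calc u₀^2 * (E * |1 - E|) / |D|
      ≤ u₀^2 * (exp (|a - 1| * T) * exp (|a - 1| * T)) / |a - 1| :=
        div_le_div₀ (by positivity) hnum hbpos hDabs
    _ = exp (2 * |a - 1| * T) / |a - 1| * u₀^2 := by
        rw [two_mul, add_mul, exp_add]; ring
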